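/- Let m, c ∈ ℝ, s > 0 and ε ≥ 0 satisfy |m − c| ≤ s + ε. Then the Gaussian measure gaussianReal m s² assigns to the set {y ∈ ℝ : y + ε > c} probability at least 1/(4e√π). (Core of Lemma 11: the Thompson-sampling lower bound with an additive approximation slack ε retains the same probability p = 1/(4e√π).) -/

import Mathlib

/-!
The interval `(m + s, m + 2s]` lies inside `{y | y + ε > c}`, and on it the density of
`N(m, s²)` is at least `e⁻² / (s √(2π))`. The interval has length `s`, so its probability is at
least `e⁻² / √(2π)`, which is `≥ 1 / (4e√π)` because `√2 · e ≤ 4`.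
-/

open MeasureTheory ProbabilityTheory Real

lemma Real.sqrt_two_mul_exp_one_le_four : √2 * rexp 1 ≤ 4 := by
  have he : rexp 1 < 2.7182818286 := exp_one_lt_d9
  have h2 : √2 ≤ 1.4143 := by
    rw [sqrt_le_left (by norm_num)]
    norm_num
  nlinarith [sqrt_nonneg 2, exp_pos 1]

lemma Real.one_div_four_mul_exp_one_mul_sqrt_pi_le :
    1 / (4 * rexp 1 * √π) ≤ rexp (-2) / √(2 * π) := by
  have hexp : rexp (-2) = (rexp 1 ^ 2)⁻¹ := by
    rw [← exp_nat_mul, ← exp_neg]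
    norm_num
  rw [hexp, sqrt_mul zero_le_two, div_le_div_iff₀ (by positivity) (by positivity)]
  have := sqrt_two_mul_exp_one_le_four
  have hpi := sqrt_pos.2 pi_pos
  have he := exp_pos 1
  field_simp
  nlinarith

namespace ProbabilityTheory

lemma exp_neg_div_two_div_sqrt_le_gaussianPDFReal {m a x : ℝ} {v : NNReal}
    (hx : (x - m) ^ 2 ≤ a * v) :
    rexp (-a / 2) / √(2 * π * v) ≤ gaussianPDFReal m v x := by
  rcases eq_or_ne v 0 with rfl | hv
  · simp [gaussianPDFReal_zero_var]
  have hv' : (0 : ℝ) < v := by positivity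
  rw [gaussianPDFReal, div_eq_inv_mul]
  refine mul_le_mul_of_nonneg_left (exp_le_exp.2 ?_) (by positivity)
  rw [le_div_iff₀ (by positivity)]
  linarith

lemma ofReal_mul_volume_le_gaussianReal {m C : ℝ} {v : NNReal} (hv : v ≠ 0) {s : Set ℝ}
    (hC : ∀ x ∈ s, C ≤ gaussianPDFReal m v x) :
    ENNReal.ofReal C * volume s ≤ gaussianReal m v s := by
  rw [gaussianReal_apply m hv, ← setLIntegral_const]
  exact setLIntegral_mono (measurable_gaussianPDF m v) fun x hx ↦
    ENNReal.ofReal_le_ofReal (hC x hx)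

end ProbabilityTheory

theorem gaussian_exceeds_target_prob_slack_general
    (m c s ε : ℝ) (hs : 0 < s) (h : |m - c| ≤ s + ε) :
    ENNReal.ofReal (1 / (4 * Real.exp 1 * Real.sqrt π)) ≤
      gaussianReal m ⟨s ^ 2, sq_nonneg s⟩ {y : ℝ | y + ε > c} := by
  set v : NNReal := ⟨s ^ 2, sq_nonneg s⟩
  have hv : (v : ℝ) = s ^ 2 := rfl
  have hsqrt : √(2 * π * v) = √(2 * π) * s := by
    rw [hv, sqrt_mul (by positivity), sqrt_sq hs.le]
  have hpdf : ∀ x ∈ Set.Ioc (m + s) (m + 2 * s),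
      rexp (-2) / (√(2 * π) * s) ≤ gaussianPDFReal m v x := by
    intro x ⟨hx₁, hx₂⟩
    have := exp_neg_div_two_div_sqrt_le_gaussianPDFReal (a := 4) (m := m)
      (show (x - m) ^ 2 ≤ 4 * v by nlinarith)
    rwa [hsqrt, show -(4 : ℝ) / 2 = -2 by norm_num] at this
  calc ENNReal.ofReal (1 / (4 * rexp 1 * √π))
      ≤ ENNReal.ofReal (rexp (-2) / (√(2 * π) * s)) * volume (Set.Ioc (m + s) (m + 2 * s)) := by
        rw [volume_Ioc, ← ENNReal.ofReal_mul (by positivity)]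
        refine ENNReal.ofReal_le_ofReal (one_div_four_mul_exp_one_mul_sqrt_pi_le.trans_eq ?_)
        field_simp
        ring
    _ ≤ gaussianReal m v (Set.Ioc (m + s) (m + 2 * s)) :=
        ofReal_mul_volume_le_gaussianReal (NNReal.coe_ne_zero.1 (hv ▸ (pow_pos hs 2).ne')) hpdf
    _ ≤ gaussianReal m v {y : ℝ | y + ε > c} :=
        measure_mono fun y ⟨hy, _⟩ ↦ show c < y + ε by linarith [neg_le_of_abs_le h]

/-- Core of Lemma 11: the Thompson-sampling lower bound with an additive approximation
slack `ε` retains the probability `p = 1/(4e√π)`: if `|m − c| ≤ s + ε` then a sample `y`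
from a Gaussian with mean `m` and standard deviation `s > 0` satisfies `y + ε > c`
with probability at least `1/(4e√π)`. -/
theorem gaussian_exceeds_target_prob_slack
    (m c s ε : ℝ) (hs : 0 < s) (hε : 0 ≤ ε) (h : |m - c| ≤ s + ε) :
    ENNReal.ofReal (1 / (4 * Real.exp 1 * Real.sqrt π)) ≤
      gaussianReal m ⟨s ^ 2, sq_nonneg s⟩ {y : ℝ | y + ε > c} :=
  gaussian_exceeds_target_prob_slack_general m c s ε hs h
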